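/- For every n ≥ 4 and every natural number c, the number M^{Irr}_{n,c} of irreducible meandric permutations of {1,…,n} with exactly c cups is even, i.e., M^{Irr}_{n,c} ≡ 0 (mod 2). -/

import Mathlib

namespace MeanderFormal

/-- The normalized chord with endpoints `a` and `b`. -/
def chord (a b : ℕ) : ℕ × ℕ := (min a b, max a b)

/-- Two normalized chords `{p.1,p.2}` and `{q.1,q.2}` cross. -/
def Cross (p q : ℕ × ℕ) : Prop :=
  (p.1 < q.1 ∧ q.1 < p.2 ∧ p.2 < q.2) ∨ (q.1 < p.1 ∧ p.1 < q.2 ∧ q.2 < p.2)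

/-- A system of chords is pairwise noncrossing. -/
def Noncrossing (S : Set (ℕ × ℕ)) : Prop :=
  ∀ p ∈ S, ∀ q ∈ S, ¬ Cross p q

/-- One-indexed value sequence of a permutation of `Fin n`:
`val σ k = a_k ∈ {1,…,n}` for `1 ≤ k ≤ n`, and `0` otherwise. -/
def val {n : ℕ} (σ : Equiv.Perm (Fin n)) (k : ℕ) : ℕ :=
  if h : 1 ≤ k ∧ k ≤ n then ((σ ⟨k - 1, by omega⟩ : Fin n) : ℕ) + 1 else 0

/-- The upper chord system of a permutation, on the points `{0,1,…,n+1}`. -/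
def upperChords {n : ℕ} (σ : Equiv.Perm (Fin n)) : Set (ℕ × ℕ) :=
  {chord 0 (val σ 1)}
    ∪ {c | ∃ k, 1 ≤ k ∧ 2 * k < n ∧ c = chord (val σ (2 * k)) (val σ (2 * k + 1))}
    ∪ {c | n % 2 = 0 ∧ c = chord (val σ n) (n + 1)}

/-- The lower chord system of a permutation, on the points `{0,1,…,n+1}`. -/
def lowerChords {n : ℕ} (σ : Equiv.Perm (Fin n)) : Set (ℕ × ℕ) :=
  {c | ∃ k, 1 ≤ k ∧ 2 * k ≤ n ∧ c = chord (val σ (2 * k - 1)) (val σ (2 * k))}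
    ∪ {c | n % 2 = 1 ∧ c = chord (val σ n) (n + 1)}

/-- `σ` is a meandric permutation. -/
def IsMeandric {n : ℕ} (σ : Equiv.Perm (Fin n)) : Prop :=
  Noncrossing (upperChords σ) ∧ Noncrossing (lowerChords σ)

/-- A set of naturals is an interval of consecutive integers. -/
def IsInterval (S : Set ℕ) : Prop :=
  ∀ x ∈ S, ∀ y ∈ S, ∀ z, x ≤ z → z ≤ y → z ∈ S

/-- A double interval of `σ`: a nonempty interval `S ⊆ {1,…,n}` whose set of
positions (preimage) is also an interval. -/
def IsDoubleInterval {n : ℕ} (σ : Equiv.Perm (Fin n)) (S : Set ℕ) : Prop :=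
  S.Nonempty ∧ S ⊆ Set.Icc 1 n ∧ IsInterval S ∧
    IsInterval {k | k ∈ Set.Icc 1 n ∧ val σ k ∈ S}

/-- `σ` is irreducible: no double interval of width `w` with `2 < w < n`. -/
def IsIrreducible {n : ℕ} (σ : Equiv.Perm (Fin n)) : Prop :=
  ¬ ∃ S : Set ℕ, IsDoubleInterval σ S ∧ 2 < S.ncard ∧ S.ncard < n

/-- A cup of `σ`: a double interval of width 2. -/
def IsCup {n : ℕ} (σ : Equiv.Perm (Fin n)) (S : Set ℕ) : Prop :=
  IsDoubleInterval σ S ∧ S.ncard = 2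

/-- The number of cups of `σ`. -/
noncomputable def cupCount {n : ℕ} (σ : Equiv.Perm (Fin n)) : ℕ :=
  Set.ncard {S : Set ℕ | IsCup σ S}

/-- `S₁` is covered by `S₂` among the double intervals of `σ`. -/
def Covers {n : ℕ} (σ : Equiv.Perm (Fin n)) (S₁ S₂ : Set ℕ) : Prop :=
  S₁ ⊂ S₂ ∧ ¬ ∃ S' : Set ℕ, IsDoubleInterval σ S' ∧ S₁ ⊂ S' ∧ S' ⊂ S₂

/-- The decomposition graph of `σ`: vertices are double intervals, adjacency is
the covering relation (in either direction). -/
def decompGraph {n : ℕ} (σ : Equiv.Perm (Fin n)) :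
    SimpleGraph {S : Set ℕ // IsDoubleInterval σ S} where
  Adj A B := Covers σ A.1 B.1 ∨ Covers σ B.1 A.1
  symm := ⟨fun A B h => Or.symm h⟩
  loopless := by
    constructor
    intro A h
    rcases h with h | h <;> exact h.1.ne rfl

/-- `v` is an articulation point of `G`: deleting it increases the number of
connected components. -/
def IsArticulationPoint {V : Type*} (G : SimpleGraph V) (v : V) : Prop :=
  Nat.card G.ConnectedComponent <
    Nat.card ((G.induce {u : V | u ≠ v}).ConnectedComponent)

/-- A snake: a meandric permutation whose decomposition graph has no
articulation point. -/
def IsSnake {n : ℕ} (σ : Equiv.Perm (Fin n)) : Prop :=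
  IsMeandric σ ∧ ∀ v, ¬ IsArticulationPoint (decompGraph σ) v

/-- The reversal permutation `(n, n-1, …, 1)`. -/
def reversalPerm (n : ℕ) : Equiv.Perm (Fin n) :=
  ⟨Fin.rev, Fin.rev, Fin.rev_rev, Fin.rev_rev⟩

/-- The number `M_n` of meandric permutations of `{1,…,n}`. -/
noncomputable def meanderCount (n : ℕ) : ℕ :=
  Nat.card {σ : Equiv.Perm (Fin n) // IsMeandric σ}

/-- The number of snakes of order `n`. -/
noncomputable def snakeCount (n : ℕ) : ℕ :=
  Nat.card {σ : Equiv.Perm (Fin n) // IsSnake σ}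

/-- The number `M^{Irr}_n` of irreducible meandric permutations of `{1,…,n}`. -/
noncomputable def irrCount (n : ℕ) : ℕ :=
  Nat.card {σ : Equiv.Perm (Fin n) // IsMeandric σ ∧ IsIrreducible σ}

/-- The number `M^{Irr}_{n,c}` of irreducible meandric permutations of `{1,…,n}`
with exactly `c` cups. -/
noncomputable def irrCupCount (n c : ℕ) : ℕ :=
  Nat.card {σ : Equiv.Perm (Fin n) // IsMeandric σ ∧ IsIrreducible σ ∧ cupCount σ = c}


/-!
Reading the curve backwards, `(a_1, …, a_n) ↦ (a_n, …, a_1)`, and turning the picture upside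
down, `a_k ↦ n + 1 - a_{n+1-k}`, are involutions on permutations that carry double intervals to
double intervals of the same width (unchanged, resp. reflected by `v ↦ n + 1 - v`), so they
preserve irreducibility and the number of cups. For odd `n` reversal exchanges the upper and
lower chord systems, hence preserves meandricity, and it has no fixed points. For even `n` the
half turn maps each chord system to its own mirror image; a meander fixed by it keeps its first
half in `{1,…,n/2}`, a double interval of width `n/2`, and for `n = 4` it is the identity, which
has the double interval `{1,2,3}`. In both cases the counted meanders pair off.
-/

lemma two_dvd_card_of_involutive {α : Type*} [Finite α] {p : α → Prop} {f : α → α}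
    (hf : Function.Involutive f) (hp : ∀ a, p a → p (f a)) (hfix : ∀ a, p a → f a ≠ a) :
    2 ∣ Nat.card {a // p a} := by
  classical
  cases nonempty_fintype α
  let g : {a // p a} → {a // p a} := fun a => ⟨f a, hp a a.2⟩
  have hg : Function.Involutive g := fun a => Subtype.ext (hf a)
  have hsq : hg.toPerm g ^ 2 = 1 := Equiv.ext hg
  have hsupp : (hg.toPerm g).support = Finset.univ := by
    ext a
    simpa [g, Subtype.ext_iff] using hfix a a.2
  simpa [hsupp, Nat.card_eq_fintype_card] using Equiv.Perm.two_dvd_card_support hsq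

section Val

variable {n : ℕ} (σ : Equiv.Perm (Fin n)) {k l : ℕ}

lemma val_mem (h1 : 1 ≤ k) (hk : k ≤ n) : 1 ≤ val σ k ∧ val σ k ≤ n := by
  rw [val, dif_pos ⟨h1, hk⟩]
  have := (σ ⟨k - 1, by omega⟩).isLt
  omega

lemma val_injOn (hk1 : 1 ≤ k) (hk : k ≤ n) (hl1 : 1 ≤ l) (hl : l ≤ n)
    (h : val σ k = val σ l) : k = l := by
  rw [val, dif_pos ⟨hk1, hk⟩, val, dif_pos ⟨hl1, hl⟩] at h
  have h' : σ ⟨k - 1, by omega⟩ = σ ⟨l - 1, by omega⟩ := Fin.ext (by omega)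
  have := Fin.mk.inj_iff.mp (σ.injective h')
  omega

lemma val_mul_reversalPerm (h1 : 1 ≤ k) (hk : k ≤ n) :
    val (σ * reversalPerm n) k = val σ (n + 1 - k) := by
  rw [val, dif_pos ⟨h1, hk⟩, val, dif_pos ⟨by omega, by omega⟩, Equiv.Perm.mul_apply]
  have hrev : reversalPerm n ⟨k - 1, by omega⟩ = ⟨n + 1 - k - 1, by omega⟩ :=
    Fin.ext (by simp only [reversalPerm, Equiv.coe_fn_mk, Fin.val_rev]; omega)
  rw [hrev]

lemma val_conj_reversalPerm (h1 : 1 ≤ k) (hk : k ≤ n) :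
    val (reversalPerm n * σ * reversalPerm n) k = n + 1 - val σ (n + 1 - k) := by
  rw [val_mul_reversalPerm _ h1 hk, val, dif_pos ⟨by omega, by omega⟩, val,
    dif_pos ⟨by omega, by omega⟩]
  simp only [Equiv.Perm.mul_apply, reversalPerm, Equiv.coe_fn_mk, Fin.val_rev]
  omega

lemma val_zero : val σ 0 = 0 := by
  simp [val]

end Val

lemma reversalPerm_mul_self (n : ℕ) : reversalPerm n * reversalPerm n = 1 :=
  Equiv.ext Fin.rev_rev

lemma reversalPerm_ne_one {n : ℕ} (hn : 2 ≤ n) : reversalPerm n ≠ 1 := by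
  intro h
  have := congrArg (fun τ : Equiv.Perm (Fin n) => (τ ⟨0, by omega⟩ : ℕ)) h
  simp only [reversalPerm, Equiv.coe_fn_mk, Fin.val_rev, Equiv.Perm.coe_one, id_eq] at this
  omega

lemma mul_reversalPerm_ne_self {n : ℕ} (hn : 2 ≤ n) (σ : Equiv.Perm (Fin n)) :
    σ * reversalPerm n ≠ σ :=
  fun h => reversalPerm_ne_one hn (mul_eq_left.1 h)

lemma conj_reversalPerm_involutive (n : ℕ) :
    Function.Involutive fun σ : Equiv.Perm (Fin n) => reversalPerm n * σ * reversalPerm n := by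
  intro σ
  simp only [← mul_assoc, reversalPerm_mul_self, one_mul]
  rw [mul_assoc, reversalPerm_mul_self, mul_one]

lemma mul_reversalPerm_involutive (n : ℕ) :
    Function.Involutive fun σ : Equiv.Perm (Fin n) => σ * reversalPerm n := by
  intro σ
  simp only [mul_assoc, reversalPerm_mul_self, mul_one]

lemma chord_comm (a b : ℕ) : chord a b = chord b a := by
  simp only [chord, min_comm, max_comm]

lemma Cross.symm {p q : ℕ × ℕ} (h : Cross p q) : Cross q p := by
  unfold Cross at *; tauto

lemma not_cross_self (p : ℕ × ℕ) : ¬ Cross p p := by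
  unfold Cross; omega

lemma cross_reflect_iff {n a b c d : ℕ} (ha : a ≤ n + 1) (hb : b ≤ n + 1) (hc : c ≤ n + 1)
    (hd : d ≤ n + 1) :
    Cross (chord (n + 1 - a) (n + 1 - b)) (chord (n + 1 - c) (n + 1 - d)) ↔
      Cross (chord a b) (chord c d) := by
  simp only [chord, Cross]
  omega

/-- The chord joining the `k`-th and `(k+1)`-st crossings; `arc σ 0` is the initial chord
`{0, a_1}` since `val σ 0 = 0`. -/
def arc {n : ℕ} (σ : Equiv.Perm (Fin n)) (k : ℕ) : ℕ × ℕ := chord (val σ k) (val σ (k + 1))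

section Chords

variable {n : ℕ} (σ : Equiv.Perm (Fin n)) {k : ℕ} {p : ℕ × ℕ}

lemma mem_upperChords (hn : 0 < n) : p ∈ upperChords σ ↔
    (∃ k, k % 2 = 0 ∧ k < n ∧ p = arc σ k) ∨ (n % 2 = 0 ∧ p = chord (val σ n) (n + 1)) := by
  simp only [upperChords, Set.mem_union, Set.mem_singleton_iff, Set.mem_ofPred_eq, arc]
  refine or_congr_left ⟨?_, ?_⟩
  · rintro (rfl | ⟨k, hk1, hkn, rfl⟩)
    · exact ⟨0, rfl, hn, by simp [val]⟩
    · exact ⟨2 * k, by omega, hkn, rfl⟩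
  · rintro ⟨k, hk2, hkn, rfl⟩
    rcases Nat.eq_zero_or_pos k with rfl | hk0
    · exact Or.inl (by simp [val])
    · exact Or.inr ⟨k / 2, by omega, by omega,
        by rw [Nat.mul_div_cancel' (Nat.dvd_of_mod_eq_zero hk2)]⟩

lemma mem_lowerChords : p ∈ lowerChords σ ↔
    (∃ k, k % 2 = 1 ∧ k < n ∧ p = arc σ k) ∨ (n % 2 = 1 ∧ p = chord (val σ n) (n + 1)) := by
  simp only [lowerChords, Set.mem_union, Set.mem_ofPred_eq, arc]
  refine or_congr_left ⟨?_, ?_⟩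
  · rintro ⟨k, hk1, hkn, rfl⟩
    exact ⟨2 * k - 1, by omega, by omega, by rw [Nat.sub_add_cancel (by omega)]⟩
  · rintro ⟨k, hk2, hkn, rfl⟩
    refine ⟨(k + 1) / 2, by omega, by omega, ?_⟩
    rw [show 2 * ((k + 1) / 2) = k + 1 by omega, Nat.add_sub_cancel]

lemma arc_mem_upperChords (hk : k % 2 = 0) (hkn : k < n) : arc σ k ∈ upperChords σ :=
  (mem_upperChords σ (by omega)).2 (Or.inl ⟨k, hk, hkn, rfl⟩)

lemma arc_mem_lowerChords (hk : k % 2 = 1) (hkn : k < n) : arc σ k ∈ lowerChords σ :=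
  (mem_lowerChords σ).2 (Or.inl ⟨k, hk, hkn, rfl⟩)

lemma chord_end_mem_upperChords (hn : n % 2 = 0) : chord (val σ n) (n + 1) ∈ upperChords σ :=
  Set.mem_union_right _ ⟨hn, rfl⟩

lemma chord_end_mem_lowerChords (hn : n % 2 = 1) : chord (val σ n) (n + 1) ∈ lowerChords σ :=
  (mem_lowerChords σ).2 (Or.inr ⟨hn, rfl⟩)

lemma IsMeandric.not_cross_arc {σ : Equiv.Perm (Fin n)} (hσ : IsMeandric σ) {l : ℕ}
    (hkn : k < n) (hln : l < n) (hkl : k % 2 = l % 2) : ¬ Cross (arc σ k) (arc σ l) := by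
  rcases Nat.mod_two_eq_zero_or_one k with hk | hk
  · exact hσ.1 _ (arc_mem_upperChords σ hk hkn) _ (arc_mem_upperChords σ (by omega) hln)
  · exact hσ.2 _ (arc_mem_lowerChords σ hk hkn) _ (arc_mem_lowerChords σ (by omega) hln)

end Chords

lemma Noncrossing.mono {S T : Set (ℕ × ℕ)} (hS : Noncrossing S) (hTS : T ⊆ S) : Noncrossing T :=
  fun p hp q hq => hS p (hTS hp) q (hTS hq)

lemma Noncrossing.insert {S : Set (ℕ × ℕ)} {e : ℕ × ℕ} (hS : Noncrossing S)
    (he : ∀ q ∈ S, ¬ Cross e q) : Noncrossing (insert e S) := by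
  rintro p (rfl | hp) q (rfl | hq)
  · exact not_cross_self _
  · exact he q hq
  · exact fun h => he p hp h.symm
  · exact hS p hp q hq

section Reverse

variable {n : ℕ} (σ : Equiv.Perm (Fin n)) {k : ℕ}

lemma arc_mul_reversalPerm (h1 : 1 ≤ k) (hkn : k < n) :
    arc (σ * reversalPerm n) k = arc σ (n - k) := by
  rw [arc, arc, val_mul_reversalPerm σ h1 hkn.le, val_mul_reversalPerm σ (by omega) hkn,
    chord_comm, Nat.sub_add_comm hkn.le, show n + 1 - (k + 1) = n - k by omega]

lemma chord_zero_val_one_mul_reversalPerm (hn : 0 < n) :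
    chord 0 (val (σ * reversalPerm n) 1) = chord 0 (val σ n) := by
  rw [val_mul_reversalPerm σ le_rfl hn, Nat.add_sub_cancel]

lemma cross_chord_zero_arc_iff (x : ℕ) (h1 : 1 ≤ k) (hkn : k < n) :
    Cross (chord 0 x) (arc σ k) ↔ Cross (chord x (n + 1)) (arc σ k) := by
  have := val_mem σ h1 hkn.le
  have := val_mem σ (k := k + 1) (by omega) hkn
  simp only [arc, chord, Cross]
  omega

lemma upperChords_mul_reversalPerm_subset (hn : n % 2 = 1) :
    upperChords (σ * reversalPerm n) ⊆
      insert (chord 0 (val σ n)) {p | ∃ k, k % 2 = 1 ∧ k < n ∧ p = arc σ k} := by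
  intro p hp
  rcases (mem_upperChords _ (by omega)).1 hp with ⟨k, hk, hkn, rfl⟩ | ⟨hn', _⟩
  · rcases Nat.eq_zero_or_pos k with rfl | hk0
    · exact Or.inl (chord_zero_val_one_mul_reversalPerm σ (by omega))
    · exact Or.inr ⟨n - k, by omega, by omega, arc_mul_reversalPerm σ hk0 hkn⟩
  · omega

lemma lowerChords_mul_reversalPerm_subset (hn : n % 2 = 1) :
    lowerChords (σ * reversalPerm n) ⊆
      insert (chord (val σ 1) (n + 1)) {p | ∃ k, k % 2 = 0 ∧ 1 ≤ k ∧ k < n ∧ p = arc σ k} := by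
  intro p hp
  rcases (mem_lowerChords _).1 hp with ⟨k, hk, hkn, rfl⟩ | ⟨-, rfl⟩
  · exact Or.inr ⟨n - k, by omega, by omega, by omega, arc_mul_reversalPerm σ (by omega) hkn⟩
  · left
    rw [val_mul_reversalPerm σ (by omega) le_rfl, Nat.add_sub_cancel_left]

lemma IsMeandric.mul_reversalPerm {σ : Equiv.Perm (Fin n)} (hσ : IsMeandric σ)
    (hn : n % 2 = 1) : IsMeandric (σ * reversalPerm n) := by
  constructor
  · refine Noncrossing.mono (Noncrossing.insert ?_ ?_) (upperChords_mul_reversalPerm_subset σ hn)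
    · rintro _ ⟨k, hk, hkn, rfl⟩ _ ⟨l, hl, hln, rfl⟩
      exact hσ.not_cross_arc hkn hln (by omega)
    · rintro _ ⟨k, hk, hkn, rfl⟩
      rw [cross_chord_zero_arc_iff σ _ (by omega) hkn]
      exact hσ.2 _ (chord_end_mem_lowerChords σ hn) _ (arc_mem_lowerChords σ hk hkn)
  · refine Noncrossing.mono (Noncrossing.insert ?_ ?_) (lowerChords_mul_reversalPerm_subset σ hn)
    · rintro _ ⟨k, hk, -, hkn, rfl⟩ _ ⟨l, hl, -, hln, rfl⟩
      exact hσ.not_cross_arc hkn hln (by omega)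
    · rintro _ ⟨k, hk, hk1, hkn, rfl⟩
      rw [← cross_chord_zero_arc_iff σ _ hk1 hkn]
      exact hσ.1 _ (arc_mem_upperChords σ (k := 0) rfl (by omega)) _
        (arc_mem_upperChords σ hk hkn)

end Reverse

section Rotate

variable {n : ℕ} (σ : Equiv.Perm (Fin n)) {k : ℕ} {p : ℕ × ℕ}

def IsReflectedChord (n : ℕ) (S : Set (ℕ × ℕ)) (p : ℕ × ℕ) : Prop :=
  ∃ a ≤ n + 1, ∃ b ≤ n + 1, chord a b ∈ S ∧ p = chord (n + 1 - a) (n + 1 - b)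

lemma Noncrossing.of_forall_isReflectedChord {S T : Set (ℕ × ℕ)} (hS : Noncrossing S)
    (hT : ∀ p ∈ T, IsReflectedChord n S p) : Noncrossing T := by
  intro p hp q hq
  obtain ⟨a, ha, b, hb, hab, rfl⟩ := hT p hp
  obtain ⟨c, hc, d, hd, hcd, rfl⟩ := hT q hq
  rw [cross_reflect_iff ha hb hc hd]
  exact hS _ hab _ hcd

lemma isReflectedChord_arc_conj_reversalPerm {S : Set (ℕ × ℕ)} (h1 : 1 ≤ k) (hkn : k < n)
    (hS : arc σ (n - k) ∈ S) :
    IsReflectedChord n S (arc (reversalPerm n * σ * reversalPerm n) k) := by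
  have := val_mem σ (k := n + 1 - k) (by omega) (by omega)
  have := val_mem σ (k := n - k) (by omega) (by omega)
  refine ⟨val σ (n + 1 - k), by omega, val σ (n - k), by omega, ?_, ?_⟩
  · rwa [chord_comm, Nat.sub_add_comm hkn.le]
  · rw [arc, val_conj_reversalPerm σ h1 hkn.le, val_conj_reversalPerm σ (by omega) hkn,
      show n + 1 - (k + 1) = n - k by omega]

lemma isReflectedChord_of_mem_upperChords_conj (hn : n % 2 = 0) (hn0 : 0 < n)
    (hp : p ∈ upperChords (reversalPerm n * σ * reversalPerm n)) :
    IsReflectedChord n (upperChords σ) p := by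
  have hn1 := val_mem σ le_rfl hn0
  have hnn := val_mem σ hn0 le_rfl
  rcases (mem_upperChords _ hn0).1 hp with ⟨k, hk, hkn, rfl⟩ | ⟨-, rfl⟩
  · rcases Nat.eq_zero_or_pos k with rfl | hk0
    · refine ⟨n + 1, le_rfl, val σ n, by omega, ?_, ?_⟩
      · rw [chord_comm]; exact chord_end_mem_upperChords σ hn
      · rw [arc, val_conj_reversalPerm σ le_rfl hn0, Nat.add_sub_cancel, Nat.sub_self]; rfl
    · exact isReflectedChord_arc_conj_reversalPerm σ hk0 hkn
        (arc_mem_upperChords σ (by omega) (by omega))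
  · refine ⟨val σ 1, by omega, 0, by omega, ?_, ?_⟩
    · rw [chord_comm]; exact arc_mem_upperChords σ (k := 0) rfl hn0
    · rw [val_conj_reversalPerm σ hn0 le_rfl, Nat.add_sub_cancel_left, Nat.sub_zero]

lemma isReflectedChord_of_mem_lowerChords_conj (hn : n % 2 = 0)
    (hp : p ∈ lowerChords (reversalPerm n * σ * reversalPerm n)) :
    IsReflectedChord n (lowerChords σ) p := by
  rcases (mem_lowerChords _).1 hp with ⟨k, hk, hkn, rfl⟩ | ⟨hn', -⟩
  · exact isReflectedChord_arc_conj_reversalPerm σ (by omega) hkn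
      (arc_mem_lowerChords σ (by omega) (by omega))
  · omega

lemma IsMeandric.conj_reversalPerm {σ : Equiv.Perm (Fin n)} (hσ : IsMeandric σ)
    (hn : n % 2 = 0) (hn0 : 0 < n) : IsMeandric (reversalPerm n * σ * reversalPerm n) :=
  ⟨hσ.1.of_forall_isReflectedChord fun _ => isReflectedChord_of_mem_upperChords_conj σ hn hn0,
    hσ.2.of_forall_isReflectedChord fun _ => isReflectedChord_of_mem_lowerChords_conj σ hn⟩

end Rotate

/-- `σ⁻¹(S)`, in the one-indexed convention of `val`. -/
def positions {n : ℕ} (σ : Equiv.Perm (Fin n)) (S : Set ℕ) : Set ℕ :=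
  {k | k ∈ Set.Icc 1 n ∧ val σ k ∈ S}

/-- The mirror image of `S ∩ {1,…,n}` under `v ↦ n + 1 - v`. -/
def mirror (n : ℕ) (S : Set ℕ) : Set ℕ := {k | k ∈ Set.Icc 1 n ∧ n + 1 - k ∈ S}

lemma isDoubleInterval_iff {n : ℕ} {σ : Equiv.Perm (Fin n)} {S : Set ℕ} :
    IsDoubleInterval σ S ↔
      S.Nonempty ∧ S ⊆ Set.Icc 1 n ∧ IsInterval S ∧ IsInterval (positions σ S) :=
  Iff.rfl

lemma isInterval_Icc (a b : ℕ) : IsInterval (Set.Icc a b) := by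
  intro x hx y hy z hxz hzy
  simp only [Set.mem_Icc] at *
  omega

section Mirror

variable {n : ℕ} {S : Set ℕ}

lemma IsInterval.mirror (hS : IsInterval S) : IsInterval (mirror n S) := by
  rintro x ⟨⟨hx1, hxn⟩, hx⟩ y ⟨⟨hy1, hyn⟩, hy⟩ z hxz hzy
  exact ⟨⟨by omega, by omega⟩, hS _ hy _ hx _ (by omega) (by omega)⟩

lemma mirror_subset_Icc : mirror n S ⊆ Set.Icc 1 n := fun _ hk => hk.1

lemma mem_mirror {k : ℕ} : k ∈ mirror n S ↔ 1 ≤ k ∧ k ≤ n ∧ n + 1 - k ∈ S := by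
  simp only [mirror, Set.mem_Icc, and_assoc]; rfl

lemma mirror_mirror (hS : S ⊆ Set.Icc 1 n) : mirror n (mirror n S) = S := by
  ext k
  rw [mem_mirror, mem_mirror]
  constructor
  · rintro ⟨h1, hn, -, -, h⟩
    rwa [show n + 1 - (n + 1 - k) = k by omega] at h
  · intro hk
    obtain ⟨h1, hn⟩ := hS hk
    exact ⟨h1, hn, by omega, by omega, by rwa [show n + 1 - (n + 1 - k) = k by omega]⟩

lemma mirror_eq_image (hS : S ⊆ Set.Icc 1 n) : mirror n S = (fun v => n + 1 - v) '' S := by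
  ext k
  rw [mem_mirror]
  constructor
  · rintro ⟨h1, hn, hk⟩
    exact ⟨n + 1 - k, hk, show n + 1 - (n + 1 - k) = k by omega⟩
  · rintro ⟨v, hv, rfl⟩
    obtain ⟨h1, hn⟩ := hS hv
    beta_reduce
    exact ⟨by omega, by omega, by rwa [show n + 1 - (n + 1 - v) = v by omega]⟩

lemma ncard_mirror (hS : S ⊆ Set.Icc 1 n) : (mirror n S).ncard = S.ncard := by
  rw [mirror_eq_image hS]
  refine Set.InjOn.ncard_image fun a ha b hb hab => ?_
  have := hS ha
  have := hS hb
  simp only [Set.mem_Icc] at *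
  omega

lemma nonempty_mirror (hne : S.Nonempty) (hS : S ⊆ Set.Icc 1 n) : (mirror n S).Nonempty := by
  rw [mirror_eq_image hS]
  exact hne.image _

end Mirror

section DoubleInterval

variable {n : ℕ} {σ : Equiv.Perm (Fin n)} {S : Set ℕ}

lemma positions_mul_reversalPerm :
    positions (σ * reversalPerm n) S = mirror n (positions σ S) := by
  ext k
  simp only [positions, mem_mirror, Set.mem_Icc]
  constructor
  · rintro ⟨⟨h1, hn⟩, hk⟩
    rw [val_mul_reversalPerm σ h1 hn] at hk
    exact ⟨h1, hn, ⟨by omega, by omega⟩, hk⟩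
  · rintro ⟨h1, hn, -, hk⟩
    exact ⟨⟨h1, hn⟩, by rwa [val_mul_reversalPerm σ h1 hn]⟩

lemma positions_conj_reversalPerm :
    positions (reversalPerm n * σ * reversalPerm n) (mirror n S) = mirror n (positions σ S) := by
  ext k
  simp only [positions, mem_mirror, Set.mem_Icc, Set.mem_ofPred_eq, and_assoc]
  refine and_congr_right fun h1 => and_congr_right fun hn => ?_
  have := val_mem σ (k := n + 1 - k) (by omega) (by omega)
  have hv : n + 1 - (n + 1 - val σ (n + 1 - k)) = val σ (n + 1 - k) := by omega
  rw [val_conj_reversalPerm σ h1 hn, hv]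
  exact ⟨fun ⟨_, _, hk⟩ => ⟨by omega, by omega, hk⟩, fun ⟨_, _, hk⟩ => ⟨by omega, by omega, hk⟩⟩

lemma IsDoubleInterval.mul_reversalPerm (h : IsDoubleInterval σ S) :
    IsDoubleInterval (σ * reversalPerm n) S := by
  obtain ⟨hne, hS, hint, hpos⟩ := isDoubleInterval_iff.1 h
  exact isDoubleInterval_iff.2 ⟨hne, hS, hint, by
    rw [positions_mul_reversalPerm]; exact hpos.mirror⟩

lemma isDoubleInterval_mul_reversalPerm_iff :
    IsDoubleInterval (σ * reversalPerm n) S ↔ IsDoubleInterval σ S := by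
  refine ⟨fun h => ?_, IsDoubleInterval.mul_reversalPerm⟩
  simpa only [mul_reversalPerm_involutive n σ] using h.mul_reversalPerm

lemma IsDoubleInterval.conj_reversalPerm (h : IsDoubleInterval σ S) :
    IsDoubleInterval (reversalPerm n * σ * reversalPerm n) (mirror n S) := by
  obtain ⟨hne, hS, hint, hpos⟩ := isDoubleInterval_iff.1 h
  exact isDoubleInterval_iff.2 ⟨nonempty_mirror hne hS, mirror_subset_Icc, hint.mirror, by
    rw [positions_conj_reversalPerm]; exact hpos.mirror⟩

lemma IsDoubleInterval.of_conj_reversalPerm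
    (h : IsDoubleInterval (reversalPerm n * σ * reversalPerm n) S) :
    IsDoubleInterval σ (mirror n S) := by
  simpa only [conj_reversalPerm_involutive n σ] using h.conj_reversalPerm

lemma IsIrreducible.mul_reversalPerm (h : IsIrreducible σ) :
    IsIrreducible (σ * reversalPerm n) := by
  rintro ⟨S, hS, hw⟩
  exact h ⟨S, isDoubleInterval_mul_reversalPerm_iff.1 hS, hw⟩

lemma IsIrreducible.conj_reversalPerm (h : IsIrreducible σ) :
    IsIrreducible (reversalPerm n * σ * reversalPerm n) := by
  rintro ⟨S, hS, hw⟩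
  exact h ⟨mirror n S, hS.of_conj_reversalPerm, by rwa [ncard_mirror hS.2.1]⟩

lemma cupCount_mul_reversalPerm :
    cupCount (σ * reversalPerm n) = cupCount σ := by
  simp only [cupCount, IsCup, isDoubleInterval_mul_reversalPerm_iff]

lemma cupCount_conj_reversalPerm :
    cupCount (reversalPerm n * σ * reversalPerm n) = cupCount σ := by
  have hcups : {S | IsCup (reversalPerm n * σ * reversalPerm n) S} =
      mirror n '' {S | IsCup σ S} := by
    ext S
    refine ⟨fun ⟨hS, hw⟩ => ⟨mirror n S, ⟨hS.of_conj_reversalPerm, ?_⟩, mirror_mirror hS.2.1⟩, ?_⟩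
    · rwa [ncard_mirror hS.2.1]
    · rintro ⟨T, ⟨hT, hw⟩, rfl⟩
      exact ⟨hT.conj_reversalPerm, by rwa [ncard_mirror hT.2.1]⟩
  rw [cupCount, cupCount, hcups]
  refine Set.InjOn.ncard_image fun S hS T hT hST => ?_
  rw [← mirror_mirror hS.1.2.1, hST, mirror_mirror hT.1.2.1]

end DoubleInterval

lemma not_isIrreducible_of_positions_Icc {n m : ℕ} {σ : Equiv.Perm (Fin n)} (hm : 2 < m)
    (hmn : m < n) (hpos : positions σ (Set.Icc 1 m) = Set.Icc 1 m) : ¬ IsIrreducible σ := by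
  refine fun hirr => hirr ⟨Set.Icc 1 m, isDoubleInterval_iff.2 ⟨?_, ?_, isInterval_Icc 1 m, ?_⟩, ?_⟩
  · exact Set.nonempty_Icc.2 (by omega)
  · exact Set.Icc_subset_Icc_right hmn.le
  · rw [hpos]; exact isInterval_Icc 1 m
  · rw [Set.ncard_Icc_nat]; omega

section Symmetric

variable {n : ℕ} {σ : Equiv.Perm (Fin n)}

lemma val_rsub_of_conj_eq (hσ : reversalPerm n * σ * reversalPerm n = σ) {k : ℕ} (h1 : 1 ≤ k)
    (hk : k ≤ n) : val σ (n + 1 - k) = n + 1 - val σ k := by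
  have h := val_conj_reversalPerm σ h1 hk
  rw [hσ] at h
  have := val_mem σ h1 hk
  have := val_mem σ (k := n + 1 - k) (by omega) (by omega)
  omega

/-- An arc of a symmetric meander leaving `{1,…,n/2}` before the middle of the curve would cross
its own mirror image. -/
lemma val_le_half_of_conj_eq (hn : n % 2 = 0) (hm : IsMeandric σ)
    (hσ : reversalPerm n * σ * reversalPerm n = σ) :
    ∀ k, 1 ≤ k → k ≤ n / 2 → val σ k ≤ n / 2 := by
  intro k hk1
  induction k, hk1 using Nat.le_induction with
  | base =>
    intro hn1
    have hvn : val σ n = n + 1 - val σ 1 := by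
      simpa using val_rsub_of_conj_eq hσ le_rfl (by omega)
    have := val_mem σ le_rfl (by omega)
    by_contra hgt
    apply hm.1 _ (arc_mem_upperChords σ (k := 0) rfl (by omega)) _
      (chord_end_mem_upperChords σ hn)
    simp only [arc, val_zero, zero_add, chord, Cross, hvn]
    omega
  | succ k hk1 ih =>
    intro hk
    have hk' := ih (by omega)
    have hsym := val_rsub_of_conj_eq hσ hk1 (by omega)
    have hsucc := val_rsub_of_conj_eq hσ (k := k + 1) (by omega) (by omega)
    have := val_mem σ hk1 (by omega)
    have hne : val σ k + val σ (k + 1) ≠ n + 1 := fun h => by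
      have := val_injOn σ (k := k + 1) (l := n + 1 - k) (by omega) (by omega) (by omega)
        (by omega) (by omega)
      omega
    by_contra hgt
    apply hm.not_cross_arc (k := k) (l := n - k) (by omega) (by omega) (by omega)
    rw [arc, arc, show n - k = n + 1 - (k + 1) by omega, hsucc,
      show n + 1 - (k + 1) + 1 = n + 1 - k by omega, hsym]
    simp only [chord, Cross]
    omega

lemma positions_Icc_half_of_conj_eq (hn : n % 2 = 0) (hm : IsMeandric σ)
    (hσ : reversalPerm n * σ * reversalPerm n = σ) :
    positions σ (Set.Icc 1 (n / 2)) = Set.Icc 1 (n / 2) := by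
  ext k
  simp only [positions, Set.mem_Icc, Set.mem_ofPred_eq]
  constructor
  · rintro ⟨⟨h1, hkn⟩, -, hv⟩
    refine ⟨h1, not_lt.1 fun hk => ?_⟩
    have := val_le_half_of_conj_eq hn hm hσ (n + 1 - k) (by omega) (by omega)
    rw [val_rsub_of_conj_eq hσ h1 hkn] at this
    omega
  · rintro ⟨h1, hk⟩
    exact ⟨⟨h1, by omega⟩, (val_mem σ h1 (by omega)).1, val_le_half_of_conj_eq hn hm hσ k h1 hk⟩

lemma not_isIrreducible_of_conj_eq_of_four {σ : Equiv.Perm (Fin 4)} (hm : IsMeandric σ)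
    (hσ : reversalPerm 4 * σ * reversalPerm 4 = σ) : ¬ IsIrreducible σ := by
  have h1 := val_le_half_of_conj_eq rfl hm hσ 1 le_rfl (by norm_num)
  have h2 := val_le_half_of_conj_eq rfl hm hσ 2 (by norm_num) (by norm_num)
  have b1 := val_mem σ (k := 1) le_rfl (by norm_num)
  have b2 := val_mem σ (k := 2) (by norm_num) (by norm_num)
  have h12 : val σ 1 ≠ val σ 2 := fun h => by
    have := val_injOn σ le_rfl (by norm_num) (by norm_num) (by norm_num) h
    omega
  have h3 : val σ 3 = 5 - val σ 2 := val_rsub_of_conj_eq hσ (k := 2) (by norm_num) (by norm_num)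
  have h4 : val σ 4 = 5 - val σ 1 := val_rsub_of_conj_eq hσ (k := 1) le_rfl (by norm_num)
  have hv1 : val σ 1 = 1 := by
    -- otherwise `σ = (2,1,4,3)`, whose upper chords `{0,2}` and `{1,4}` cross
    by_contra hne
    apply hm.not_cross_arc (k := 0) (l := 2) (by norm_num) (by norm_num) rfl
    simp only [arc, val_zero, chord, Cross, zero_add, Nat.reduceAdd, h3]
    omega
  refine not_isIrreducible_of_positions_Icc (m := 3) (by norm_num) (by norm_num) ?_
  ext k
  simp only [positions, Set.mem_Icc, Set.mem_ofPred_eq]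
  constructor
  · rintro ⟨⟨hk1, hk4⟩, hv⟩
    interval_cases k <;> omega
  · rintro ⟨hk1, hk3⟩
    interval_cases k <;> omega

lemma not_isIrreducible_of_conj_eq (hn : n % 2 = 0) (h4 : 4 ≤ n) (hm : IsMeandric σ)
    (hσ : reversalPerm n * σ * reversalPerm n = σ) : ¬ IsIrreducible σ := by
  obtain rfl | h6 : n = 4 ∨ 6 ≤ n := by omega
  · exact not_isIrreducible_of_conj_eq_of_four hm hσ
  · exact not_isIrreducible_of_positions_Icc (by omega) (by omega)
      (positions_Icc_half_of_conj_eq hn hm hσ)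

end Symmetric

/-- For every `n ≥ 4` and every `c`, the number `M^{Irr}_{n,c}` of
irreducible meandric permutations of `{1,…,n}` with exactly `c` cups is even. -/
theorem irrCupCount_even (n c : ℕ) (hn : 4 ≤ n) : 2 ∣ irrCupCount n c := by
  rcases Nat.mod_two_eq_zero_or_one n with hn2 | hn2
  · refine two_dvd_card_of_involutive (conj_reversalPerm_involutive n) ?_ ?_
    · exact fun σ ⟨hm, hirr, hc⟩ => ⟨hm.conj_reversalPerm hn2 (by omega), hirr.conj_reversalPerm,
        cupCount_conj_reversalPerm.trans hc⟩
    · exact fun σ ⟨hm, hirr, _⟩ hσ => not_isIrreducible_of_conj_eq hn2 hn hm hσ hirr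
  · refine two_dvd_card_of_involutive (mul_reversalPerm_involutive n) ?_ ?_
    · exact fun σ ⟨hm, hirr, hc⟩ => ⟨hm.mul_reversalPerm hn2, hirr.mul_reversalPerm,
        cupCount_mul_reversalPerm.trans hc⟩
    · exact fun σ _ => mul_reversalPerm_ne_self (by omega) σ

end MeanderFormal
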